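/- In Euclidean ℝⁿ, for constants 0 < c₁ < c₂ and any ε > 0 there exists c = c(c₁,c₂,ε) such that for all q, p ∈ ℝⁿ and all 0 < ν < τ, ∫_{|q-z|<ε} Q(c₁(τ-ν),q,z)·Q(c₂ν,z,p) dz ≤ c·Q(c₂τ,q,p), where Q(α,x,y) = (4πα)^{-n/2} exp(-|x-y|²/(4α)). -/

import Mathlib

/-!
Completing the square in `z` factors the product of two heat kernels as
`Q(a, x, z) Q(b, z, y) = Q(a + b, x, y) Q(ab/(a + b), z, m)` with `m = (bx + ay)/(a + b)`, so
integrating over all of `ℝⁿ` gives the semigroup identity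
`∫ Q(a, x, z) Q(b, z, y) dz = Q(a + b, x, y)`, and the integral over the ball is at most this. With `a = c₁(τ - ν)` and `b = c₂ν` one has
`c₁τ ≤ a + b ≤ c₂τ`, and `Q(α, x, y) ≤ κ^{n/2} Q(β, x, y)` whenever `α ≤ β ≤ κα`; take `κ = c₂/c₁`.
-/

open Real MeasureTheory Module

section HeatKernel

variable {E : Type*} [NormedAddCommGroup E] [InnerProductSpace ℝ E]

noncomputable def heatKernel (α : ℝ) (x y : E) : ℝ :=
  (4 * π * α) ^ (-(finrank ℝ E : ℝ) / 2) * exp (-(dist x y) ^ 2 / (4 * α))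

lemma heatKernel_nonneg {α : ℝ} (hα : 0 ≤ α) (x y : E) : 0 ≤ heatKernel α x y := by
  unfold heatKernel
  have := rpow_nonneg (by positivity : 0 ≤ 4 * π * α) (-(finrank ℝ E : ℝ) / 2)
  positivity

lemma heatKernel_le_rpow_mul_heatKernel {α β κ : ℝ} (hα : 0 < α) (hαβ : α ≤ β) (hβκ : β ≤ κ * α)
    (x y : E) : heatKernel α x y ≤ κ ^ ((finrank ℝ E : ℝ) / 2) * heatKernel β x y := by
  set t : ℝ := (finrank ℝ E : ℝ) / 2
  have hβ : 0 < β := hα.trans_le hαβ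
  have hκ : 0 < κ := pos_of_mul_pos_left (hβ.trans_le hβκ) hα.le
  have hprefactor : (4 * π * α) ^ (-t) ≤ κ ^ t * (4 * π * β) ^ (-t) := by
    have hmono : (4 * π * β) ^ t ≤ (4 * π * α) ^ t * κ ^ t := by
      rw [← mul_rpow (by positivity) hκ.le]
      exact rpow_le_rpow (by positivity) (by nlinarith [pi_pos]) (by positivity)
    rw [rpow_neg (by positivity), rpow_neg (by positivity), ← div_eq_mul_inv,
      le_div_iff₀ (by positivity), inv_mul_le_iff₀ (by positivity)]
    exact hmono
  have hexponent : -(dist x y) ^ 2 / (4 * α) ≤ -(dist x y) ^ 2 / (4 * β) := by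
    simp only [neg_div, neg_le_neg_iff]
    exact div_le_div_of_nonneg_left (by positivity) (by positivity) (by linarith)
  unfold heatKernel
  rw [neg_div, ← mul_assoc]
  exact mul_le_mul hprefactor (exp_le_exp.2 hexponent) (exp_pos _).le
    (mul_nonneg (by positivity) (rpow_nonneg (by positivity) _))

lemma norm_sq_div_add_norm_sq_div {a b : ℝ} (ha : 0 < a) (hb : 0 < b) (u v : E) :
    ‖u‖ ^ 2 / (4 * a) + ‖v‖ ^ 2 / (4 * b) =
      ‖u + v‖ ^ 2 / (4 * (a + b)) + ‖b • u - a • v‖ ^ 2 / (4 * a * b * (a + b)) := by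
  rw [norm_add_sq_real, norm_sub_sq_real, real_inner_smul_left, real_inner_smul_right,
    norm_smul, norm_smul, norm_of_nonneg ha.le, norm_of_nonneg hb.le]
  field_simp
  ring

lemma dist_sq_div_add_dist_sq_div {a b : ℝ} (ha : 0 < a) (hb : 0 < b) (x y z : E) :
    dist x z ^ 2 / (4 * a) + dist z y ^ 2 / (4 * b) =
      dist x y ^ 2 / (4 * (a + b)) +
        dist z ((a + b)⁻¹ • (b • x + a • y)) ^ 2 / (4 * (a * b / (a + b))) := by
  have hab : 0 < a + b := add_pos ha hb
  have hcenter : b • (x - z) - a • (z - y) = (a + b) • ((a + b)⁻¹ • (b • x + a • y) - z) := by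
    rw [smul_sub (a + b), smul_inv_smul₀ hab.ne']
    module
  rw [dist_eq_norm, dist_eq_norm, dist_eq_norm, dist_eq_norm', norm_sq_div_add_norm_sq_div ha hb,
    sub_add_sub_cancel, hcenter, norm_smul, norm_of_nonneg hab.le]
  field_simp

lemma heatKernel_mul_heatKernel {a b : ℝ} (ha : 0 < a) (hb : 0 < b) (x y z : E) :
    heatKernel a x z * heatKernel b z y =
      heatKernel (a + b) x y * heatKernel (a * b / (a + b)) z ((a + b)⁻¹ • (b • x + a • y)) := by
  have hprefactor :
      (4 * π * a) * (4 * π * b) = (4 * π * (a + b)) * (4 * π * (a * b / (a + b))) := by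
    field_simp
  have hexponent := dist_sq_div_add_dist_sq_div ha hb x y z
  unfold heatKernel
  set d : ℝ := -(finrank ℝ E : ℝ) / 2
  calc _ = ((4 * π * a) ^ d * (4 * π * b) ^ d) *
        (exp (-(dist x z ^ 2 / (4 * a))) * exp (-(dist z y ^ 2 / (4 * b)))) := by
        simp only [neg_div]
        ring
    _ = ((4 * π * a) * (4 * π * b)) ^ d *
        exp (-(dist x z ^ 2 / (4 * a) + dist z y ^ 2 / (4 * b))) := by
        rw [mul_rpow (by positivity : 0 ≤ 4 * π * a) (by positivity : 0 ≤ 4 * π * b), neg_add,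
          exp_add]
    _ = _ := by
        rw [hprefactor, hexponent, neg_add, exp_add, mul_rpow (by positivity : 0 ≤ 4 * π * (a + b))
          (by positivity : 0 ≤ 4 * π * (a * b / (a + b)))]
        simp only [neg_div]
        ring

variable [FiniteDimensional ℝ E] [MeasurableSpace E] [BorelSpace E]

lemma integral_heatKernel {α : ℝ} (hα : 0 < α) (y : E) : ∫ x, heatKernel α x y = 1 := by
  have hexponent (x : E) : -(dist x y) ^ 2 / (4 * α) = -(4 * α)⁻¹ * ‖x - y‖ ^ 2 := by
    rw [dist_eq_norm]
    ring
  have hgauss :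
      ∫ x : E, exp (-(4 * α)⁻¹ * ‖x - y‖ ^ 2) = (4 * π * α) ^ ((finrank ℝ E : ℝ) / 2) := by
    rw [integral_sub_right_eq_self (fun x : E => exp (-(4 * α)⁻¹ * ‖x‖ ^ 2)) y,
      GaussianFourier.integral_rexp_neg_mul_sq_norm (by positivity)]
    congr 1
    field_simp
  unfold heatKernel
  rw [integral_const_mul]
  simp_rw [hexponent]
  rw [hgauss, neg_div, rpow_neg (by positivity)]
  exact inv_mul_cancel₀ (by positivity)

lemma integrable_heatKernel {α : ℝ} (hα : 0 < α) (y : E) : Integrable fun x => heatKernel α x y :=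
  Integrable.of_integral_ne_zero (by simp [integral_heatKernel hα])

lemma integrable_heatKernel_mul_heatKernel {a b : ℝ} (ha : 0 < a) (hb : 0 < b) (x y : E) :
    Integrable fun z => heatKernel a x z * heatKernel b z y := by
  simp_rw [heatKernel_mul_heatKernel ha hb]
  exact (integrable_heatKernel (by positivity) _).const_mul _

lemma integral_heatKernel_mul_heatKernel {a b : ℝ} (ha : 0 < a) (hb : 0 < b) (x y : E) :
    ∫ z, heatKernel a x z * heatKernel b z y = heatKernel (a + b) x y := by
  simp_rw [heatKernel_mul_heatKernel ha hb, integral_const_mul,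
    integral_heatKernel (by positivity : 0 < a * b / (a + b)), mul_one]

lemma setIntegral_heatKernel_mul_heatKernel_le {a b : ℝ} (ha : 0 < a) (hb : 0 < b) (x y : E)
    (s : Set E) : ∫ z in s, heatKernel a x z * heatKernel b z y ≤ heatKernel (a + b) x y :=
  (integral_heatKernel_mul_heatKernel ha hb x y).subst <|
    setIntegral_le_integral (integrable_heatKernel_mul_heatKernel ha hb x y)
      (.of_forall fun _ => mul_nonneg (heatKernel_nonneg ha.le _ _) (heatKernel_nonneg hb.le _ _))

end HeatKernel

theorem gaussian_convolution_bound (n : ℕ) (c₁ c₂ ε : ℝ)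
    (hc₁ : 0 < c₁) (hc : c₁ < c₂) :
    ∃ c : ℝ, ∀ (q p : EuclideanSpace ℝ (Fin n)) (ν τ : ℝ), 0 < ν → ν < τ →
      (∫ z in Metric.ball q ε,
          ((4 * π * (c₁ * (τ - ν))) ^ (-(n : ℝ) / 2) *
              Real.exp (-(dist q z) ^ 2 / (4 * (c₁ * (τ - ν))))) *
            ((4 * π * (c₂ * ν)) ^ (-(n : ℝ) / 2) *
              Real.exp (-(dist z p) ^ 2 / (4 * (c₂ * ν))))) ≤
        c * ((4 * π * (c₂ * τ)) ^ (-(n : ℝ) / 2) *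
              Real.exp (-(dist q p) ^ 2 / (4 * (c₂ * τ)))) := by
  refine ⟨(c₂ / c₁) ^ ((n : ℝ) / 2), fun q p ν τ hν hντ => ?_⟩
  have ha : 0 < c₁ * (τ - ν) := mul_pos hc₁ (sub_pos.2 hντ)
  have hb : 0 < c₂ * ν := mul_pos (hc₁.trans hc) hν
  have hsum_le : c₁ * (τ - ν) + c₂ * ν ≤ c₂ * τ := by nlinarith
  have hsum_ge : c₂ * τ ≤ c₂ / c₁ * (c₁ * (τ - ν) + c₂ * ν) := by
    rw [div_mul_eq_mul_div, le_div_iff₀ hc₁]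
    nlinarith
  simpa only [heatKernel, finrank_euclideanSpace_fin] using
    (setIntegral_heatKernel_mul_heatKernel_le ha hb q p (Metric.ball q ε)).trans
      (heatKernel_le_rpow_mul_heatKernel (add_pos ha hb) hsum_le hsum_ge q p)
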